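/- Let M = B ×_{f₁} M₁ × ⋯ ×_{f_m} M_m be a multiply warped product with semi-symmetric metric connection ∇̄ associated to P ∈ Γ(TB). If ζ = ζ_B + Σᵢ ζᵢ is a semi-symmetric metric Killing vector field on M, then: (1) ζ_B is a semi-symmetric metric Killing vector field on B; (2) each ζᵢ is a Killing vector field on Mᵢ provided Σᵢ[fᵢ·ζ_B(fᵢ) + fᵢ²π(ζ_B)]·‖Xᵢ‖ᵢ² = 0 for all vector fields X = X_B + Σᵢ Xᵢ on M. -/
import Mathlib


/-!
An abstract (axiomatized) framework for pseudo-Riemannian geometry, following the paper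
"Killing Vector Fields on Multiply Warped Products with a Semi-symmetric Metric Connection".
Here `R` plays the role of the commutative ring of smooth functions on the (product)
manifold, `V` the `R`-module of vector fields, `g` the pseudo-Riemannian metric,
`nabla` the Levi-Civita connection, `bracket` the Lie bracket of vector fields,
`act X h` the action `X(h)` of a vector field `X` on a function `h`,
`ric` the Ricci curvature, and `compactNoBoundary` records that the underlying
manifold is compact and without boundary.
-/
structure PR (R : Type*) [CommRing R] (V : Type*) [AddCommGroup V] [Module R V] where
  g : V → V → R
  g_symm : ∀ X Y, g X Y = g Y X
  g_addl : ∀ X Y Z, g (X + Y) Z = g X Z + g Y Z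
  g_smull : ∀ (a : R) (X Y : V), g (a • X) Y = a * g X Y
  nabla : V → V → V
  bracket : V → V → V
  act : V → R → R
  ric : V → V → R
  compactNoBoundary : Prop

namespace PR

variable {R : Type*} [CommRing R] {V : Type*} [AddCommGroup V] [Module R V]

/-- The semi-symmetric metric connection associated to `P`:
`∇̄_X Y = ∇_X Y + π(Y)X − g(X,Y)P`, where `π(X) = g(X,P)`. -/
def snabla (C : PR R V) (P X Y : V) : V :=
  C.nabla X Y + C.g Y P • X - C.g X Y • P

/-- The Lie derivative of the metric: `(L_ζ g)(X,Y) = g(∇_X ζ, Y) + g(∇_Y ζ, X)`. -/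
def lieg (C : PR R V) (ζ X Y : V) : R :=
  C.g (C.nabla X ζ) Y + C.g (C.nabla Y ζ) X

/-- The semi-symmetric metric Lie derivative of the metric:
`(L̄_ζ g)(X,Y) = g(∇̄_X ζ, Y) + g(∇̄_Y ζ, X)`. -/
def slieg (C : PR R V) (P ζ X Y : V) : R :=
  C.g (C.snabla P X ζ) Y + C.g (C.snabla P Y ζ) X

/-- `ζ` is a Killing vector field iff `g(∇_X ζ, X) = 0` for every vector field `X`. -/
def IsKilling (C : PR R V) (ζ : V) : Prop := ∀ X, C.g (C.nabla X ζ) X = 0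

/-- `ζ` is a semi-symmetric metric Killing vector field iff `g(∇̄_X ζ, X) = 0`
for every vector field `X`. -/
def IsSKilling (C : PR R V) (P ζ : V) : Prop := ∀ X, C.g (C.snabla P X ζ) X = 0

/-- The second Lie derivative of the metric, `(L_ζ L_ζ g)(X,Y) =
g(∇_ζ∇_X ζ − ∇_{[ζ,X]}ζ, Y) + g(X, ∇_ζ∇_Y ζ − ∇_{[ζ,Y]}ζ) + 2g(∇_X ζ, ∇_Y ζ)`. -/
def lie2g (C : PR R V) (ζ X Y : V) : R :=
  C.g (C.nabla ζ (C.nabla X ζ) - C.nabla (C.bracket ζ X) ζ) Y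
    + C.g X (C.nabla ζ (C.nabla Y ζ) - C.nabla (C.bracket ζ Y) ζ)
    + 2 * C.g (C.nabla X ζ) (C.nabla Y ζ)

/-- `ζ` is a 2-Killing vector field iff `L_ζ L_ζ g = 0`. -/
def IsTwoKilling (C : PR R V) (ζ : V) : Prop := ∀ X Y, C.lie2g ζ X Y = 0

end PR

/-- A multiply warped product `M = B ×_{f₁} M₁ × ⋯ ×_{f_m} M_m`: the data of the base and
the `m` fibres, the warping functions `f i` (with multiplicative inverses `finv i`) and
their gradients `gradf i` on `B`. Vector fields on `M` are pairs `X = (X_B, (X_i)_i)` of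
(lifts of) vector fields on the factors. -/
structure MW (R : Type*) [CommRing R] {m : ℕ} (VB : Type*) (V : Fin m → Type*)
    [AddCommGroup VB] [Module R VB] [∀ i, AddCommGroup (V i)] [∀ i, Module R (V i)] where
  CB : PR R VB
  C : ∀ i, PR R (V i)
  f : Fin m → R
  finv : Fin m → R
  f_inv : ∀ i, f i * finv i = 1
  gradf : Fin m → VB
  gradf_spec : ∀ i Y, CB.g (gradf i) Y = CB.act Y (f i)

namespace MW

variable {R : Type*} [CommRing R] {m : ℕ} {VB : Type*} {V : Fin m → Type*}
  [AddCommGroup VB] [Module R VB] [∀ i, AddCommGroup (V i)] [∀ i, Module R (V i)]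

/-- The multiply warped product metric `g = g_B ⊕ f₁²g₁ ⊕ ⋯ ⊕ f_m²g_m`. -/
def gW (W : MW R VB V) (X Y : VB × (∀ i, V i)) : R :=
  W.CB.g X.1 Y.1 + ∑ i, (W.f i) ^ 2 * (W.C i).g (X.2 i) (Y.2 i)

/-- The semi-symmetric metric connection of the multiply warped product for `P ∈ Γ(TB)`
(combining the five formulas of Lemma 4.1 of the paper). -/
def snablaB (W : MW R VB V) (P : VB) (X Y : VB × (∀ i, V i)) : VB × (∀ i, V i) :=
  (W.CB.snabla P X.1 Y.1 - (∑ i, (W.f i * (W.C i).g (X.2 i) (Y.2 i)) • W.gradf i)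
      - (∑ i, (W.f i) ^ 2 * (W.C i).g (X.2 i) (Y.2 i)) • P,
    fun i => (W.C i).nabla (X.2 i) (Y.2 i)
      + (W.CB.act X.1 (W.f i) * W.finv i) • Y.2 i
      + (W.CB.act Y.1 (W.f i) * W.finv i + W.CB.g Y.1 P) • X.2 i)

/-- For `P ∈ Γ(TM_r)`, the value of the 1-form `π` on the lift of the `j`-th component of
a vertical field `z`: `π(z_j) = f_r² g_r((z_j)_r, P)` (nonzero only for `j = r`). -/
def piV (W : MW R VB V) (r : Fin m) (P : V r) (z : ∀ i, V i) (j : Fin m) : R :=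
  (W.f r) ^ 2 * (W.C r).g (Pi.single j (z j) r) P

/-- The semi-symmetric metric connection of the multiply warped product for
`P ∈ Γ(TM_r)` (combining the five formulas of Lemma 4.2 of the paper). -/
def snablaF (W : MW R VB V) (r : Fin m) (P : V r) (X Y : VB × (∀ i, V i)) :
    VB × (∀ i, V i) :=
  (W.CB.nabla X.1 Y.1 + ((W.f r) ^ 2 * (W.C r).g (Y.2 r) P) • X.1
      - ∑ i, (W.f i * (W.C i).g (X.2 i) (Y.2 i)) • W.gradf i,
    (fun i => (W.C i).nabla (X.2 i) (Y.2 i)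
      + (W.CB.act X.1 (W.f i) * W.finv i) • Y.2 i
      + (W.CB.act Y.1 (W.f i) * W.finv i) • X.2 i
      + ((W.f r) ^ 2 * (W.C r).g (Y.2 r) P) • X.2 i)
    + Pi.single r ((-(W.gW X Y)) • P))

/-- Semi-symmetric metric Lie derivative of the multiply warped metric, `P ∈ Γ(TB)`. -/
def sliegB (W : MW R VB V) (P : VB) (ζ X Y : VB × (∀ i, V i)) : R :=
  W.gW (W.snablaB P X ζ) Y + W.gW (W.snablaB P Y ζ) X

/-- Semi-symmetric metric Lie derivative of the multiply warped metric, `P ∈ Γ(TM_r)`. -/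
def sliegF (W : MW R VB V) (r : Fin m) (P : V r) (ζ X Y : VB × (∀ i, V i)) : R :=
  W.gW (W.snablaF r P X ζ) Y + W.gW (W.snablaF r P Y ζ) X

/-- `ζ` is a semi-symmetric metric Killing field of the multiply warped product,
`P ∈ Γ(TB)`. -/
def IsSKillingB (W : MW R VB V) (P : VB) (ζ : VB × (∀ i, V i)) : Prop :=
  ∀ X, W.gW (W.snablaB P X ζ) X = 0

/-- `ζ` is a semi-symmetric metric Killing field of the multiply warped product,
`P ∈ Γ(TM_r)`. -/
def IsSKillingF (W : MW R VB V) (r : Fin m) (P : V r) (ζ : VB × (∀ i, V i)) : Prop :=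
  ∀ X, W.gW (W.snablaF r P X ζ) X = 0

/-- The Levi-Civita connection of the multiply warped product (Lemma 6.7 of the paper). -/
def nablaT (W : MW R VB V) (X Y : VB × (∀ i, V i)) : VB × (∀ i, V i) :=
  (W.CB.nabla X.1 Y.1 - ∑ i, (W.f i * (W.C i).g (X.2 i) (Y.2 i)) • W.gradf i,
    fun i => (W.C i).nabla (X.2 i) (Y.2 i)
      + (W.CB.act X.1 (W.f i) * W.finv i) • Y.2 i
      + (W.CB.act Y.1 (W.f i) * W.finv i) • X.2 i)

/-- The Lie bracket of (lifted) vector fields on the multiply warped product. -/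
def bracketT (W : MW R VB V) (X Y : VB × (∀ i, V i)) : VB × (∀ i, V i) :=
  (W.CB.bracket X.1 Y.1, fun i => (W.C i).bracket (X.2 i) (Y.2 i))

/-- The action of a vector field of the multiply warped product on functions. -/
def actT (W : MW R VB V) (X : VB × (∀ i, V i)) (h : R) : R :=
  W.CB.act X.1 h + ∑ i, (W.C i).act (X.2 i) h

/-- The Lie derivative of the multiply warped metric. -/
def liegT (W : MW R VB V) (ζ X Y : VB × (∀ i, V i)) : R :=
  W.gW (W.nablaT X ζ) Y + W.gW (W.nablaT Y ζ) X

/-- The second Lie derivative `(L_ζ L_ζ g)(X,Y)` of the multiply warped metric. -/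
def lie2T (W : MW R VB V) (ζ X Y : VB × (∀ i, V i)) : R :=
  W.gW (W.nablaT ζ (W.nablaT X ζ) - W.nablaT (W.bracketT ζ X) ζ) Y
    + W.gW X (W.nablaT ζ (W.nablaT Y ζ) - W.nablaT (W.bracketT ζ Y) ζ)
    + 2 * W.gW (W.nablaT X ζ) (W.nablaT Y ζ)

/-- `ζ` is a 2-Killing vector field of the multiply warped product. -/
def IsTwoKillingT (W : MW R VB V) (ζ : VB × (∀ i, V i)) : Prop :=
  ∀ X Y, W.lie2T ζ X Y = 0

/-- The `(0,4)`-curvature `R(X,Y,Z,U) = g(∇_X∇_Y Z − ∇_Y∇_X Z − ∇_{[X,Y]}Z, U)`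
of the multiply warped product. -/
def RmT (W : MW R VB V) (X Y Z U : VB × (∀ i, V i)) : R :=
  W.gW (W.nablaT X (W.nablaT Y Z) - W.nablaT Y (W.nablaT X Z)
    - W.nablaT (W.bracketT X Y) Z) U

/-- The squared area `A²(X,Y) = g(X,X)g(Y,Y) − g(X,Y)²` of the parallelogram
generated by `X` and `Y`. -/
def A2 (W : MW R VB V) (X Y : VB × (∀ i, V i)) : R :=
  W.gW X X * W.gW Y Y - (W.gW X Y) ^ 2

end MW

namespace PR

variable {R : Type*} [CommRing R] {V : Type*} [AddCommGroup V] [Module R V]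

lemma g_zerol (C : PR R V) (Y : V) : C.g 0 Y = 0 := by
  have := C.g_smull (0 : R) Y Y
  simpa using this

lemma g_zeror (C : PR R V) (Y : V) : C.g Y 0 = 0 := by
  rw [C.g_symm]; exact C.g_zerol Y

lemma g_subl (C : PR R V) (X Y Z : V) : C.g (X - Y) Z = C.g X Z - C.g Y Z := by
  have h1 : X - Y = X + (-1 : R) • Y := by rw [neg_one_smul]; abel
  rw [h1, C.g_addl, C.g_smull]; ring

end PR

/-- **Proposition 4.8.** For a multiply warped product with semi-symmetric metric connection
associated to `P ∈ Γ(TB)`, if `ζ = ζ_B + Σᵢ ζᵢ` is a semi-symmetric metric Killing vector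
field on `M`, then:
(1) `ζ_B` is a semi-symmetric metric Killing vector field on `B`;
(2) each `ζᵢ` is a Killing vector field on `Mᵢ` provided
    `Σᵢ [fᵢζ_B(fᵢ) + fᵢ²π(ζ_B)]‖Xᵢ‖ᵢ² = 0` for all `X = X_B + Σᵢ Xᵢ`. -/
theorem statement_11 {R : Type*} [CommRing R] {m : ℕ} {VB : Type*} {V : Fin m → Type*}
    [AddCommGroup VB] [Module R VB] [∀ i, AddCommGroup (V i)] [∀ i, Module R (V i)]
    (W : MW R VB V) (P : VB) (ζB : VB) (z : ∀ i, V i)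
    (h : W.IsSKillingB P (ζB, z)) :
    W.CB.IsSKilling P ζB ∧
      ((∀ x : (∀ i, V i),
        ∑ i, (W.f i * W.CB.act ζB (W.f i) + (W.f i) ^ 2 * W.CB.g ζB P)
          * (W.C i).g (x i) (x i) = 0) →
        ∀ i, (W.C i).IsKilling (z i)) := by
  have act0 : ∀ k, W.CB.act (0 : VB) (W.f k) = 0 := fun k => by
    rw [← W.gradf_spec]; exact W.CB.g_zeror _
  constructor
  · intro X
    have hX := h (X, 0)
    simp only [MW.gW, MW.snablaB, Pi.zero_apply, PR.g_zerol, PR.g_zeror, mul_zero, zero_mul,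
      zero_smul, Finset.sum_const_zero, sub_zero, add_zero] at hX
    exact hX
  · intro hyp i xx
    -- specialize h at (0, Pi.single i xx)
    have h1 := h (0, Pi.single i xx)
    simp only [MW.gW, MW.snablaB] at h1
    have hfirst : W.CB.g
        (W.CB.snabla P (0 : VB) ζB - (∑ k, (W.f k * (W.C k).g (Pi.single i xx k) (z k)) • W.gradf k)
          - (∑ k, (W.f k) ^ 2 * (W.C k).g (Pi.single i xx k) (z k)) • P) (0 : VB) = 0 :=
      W.CB.g_zeror _
    rw [hfirst, zero_add] at h1
    -- reduce the sum to the single index i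
    have hsum : ∀ k ∈ Finset.univ, k ≠ i →
        (W.f k) ^ 2 * (W.C k).g ((W.C k).nabla (Pi.single i xx k) (z k)
          + (W.CB.act (0 : VB) (W.f k) * W.finv k) • z k
          + (W.CB.act ζB (W.f k) * W.finv k + W.CB.g ζB P) • Pi.single i xx k)
          (Pi.single i xx k) = 0 := by
      intro k _ hk
      rw [Pi.single_eq_of_ne hk, PR.g_zeror, mul_zero]
    rw [Finset.sum_eq_single_of_mem i (Finset.mem_univ i) hsum] at h1
    rw [Pi.single_eq_same] at h1
    rw [(W.C i).g_addl, (W.C i).g_addl, (W.C i).g_smull, (W.C i).g_smull, act0,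
      zero_mul] at h1
    -- specialize the hypothesis to Pi.single i xx
    have h2 := hyp (Pi.single i xx)
    have hsum2 : ∀ k ∈ Finset.univ, k ≠ i →
        (W.f k * W.CB.act ζB (W.f k) + (W.f k) ^ 2 * W.CB.g ζB P)
          * (W.C k).g (Pi.single i xx k) (Pi.single i xx k) = 0 := by
      intro k _ hk
      rw [Pi.single_eq_of_ne hk, PR.g_zeror, mul_zero]
    rw [Finset.sum_eq_single_of_mem i (Finset.mem_univ i) hsum2, Pi.single_eq_same] at h2
    have key : (W.f i) ^ 2 * (W.C i).g ((W.C i).nabla xx (z i)) xx = 0 := by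
      linear_combination h1 - h2
        - (W.f i * W.CB.act ζB (W.f i) * (W.C i).g xx xx) * (W.f_inv i)
    have hfinal : (W.C i).g ((W.C i).nabla xx (z i)) xx = 0 := by
      linear_combination (W.finv i) ^ 2 * key
        - ((W.C i).g ((W.C i).nabla xx (z i)) xx) * (W.f i * W.finv i + 1) * (W.f_inv i)
    exact hfinal
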